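/- Let A ∈ {0,*}^{n×n}, let B ∈ {0,*}^{n×q} be a dedicated input pattern, and let C be a dedicated output pattern on the n states. If (A,B,C) is GSIO, then the pair (Â, [C 0]) is structurally observable, where [C 0] is C extended by q zero columns indexed by the input vertices of Â. Consequently, the number of dedicated sensors in any C making (A,B,C) GSIO is at least H(Â). -/

import Mathlib

/-- The realization of a structured pattern (a set of free positions) determined by an
assignment `v` of complex values to its free entries: the matrix vanishes outside the
free positions. -/
def Pattern.realize {a b : Type*} [DecidableEq a] [DecidableEq b] (P : Finset (a × b))
    (v : {e // e ∈ P} → ℂ) : Matrix a b ℂ :=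
  Matrix.of fun i j => if h : (i, j) ∈ P then v ⟨(i, j), h⟩ else 0

/-- The structured system `(A, B, C)` (with zero feedthrough) is generically state and
input observable (GSIO): there is a nonzero polynomial in the free entries of the
patterns such that every realization at which it does not vanish has a Rosenbrock
matrix `[[Ã - s I, B̃], [C̃, 0]]` of full column rank `n + q` for every `s ∈ ℂ`. -/
def IsGSIO {n q m : ℕ} (A : Finset (Fin n × Fin n)) (B : Finset (Fin n × Fin q))
    (C : Finset (Fin m × Fin n)) : Prop :=
  ∃ p : MvPolynomial (({e // e ∈ A} ⊕ {e // e ∈ B}) ⊕ {e // e ∈ C}) ℂ, p ≠ 0 ∧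
    ∀ v : (({e // e ∈ A} ⊕ {e // e ∈ B}) ⊕ {e // e ∈ C}) → ℂ,
      MvPolynomial.eval v p ≠ 0 → ∀ s : ℂ,
        (Matrix.fromBlocks
            (Pattern.realize A (fun e => v (Sum.inl (Sum.inl e))) -
              s • (1 : Matrix (Fin n) (Fin n) ℂ))
            (Pattern.realize B (fun e => v (Sum.inl (Sum.inr e))))
            (Pattern.realize C (fun e => v (Sum.inr e))) 0).rank = n + q

/-- The structured pair `(M, C)` is structurally observable: there is a nonzero
polynomial in the free entries such that every realization at which it does not vanish
has `[M̃ - s I; C̃]` of full column rank for every `s ∈ ℂ`. -/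
def IsStructObs {ι : Type*} [Fintype ι] [DecidableEq ι] {m : ℕ}
    (M : Finset (ι × ι)) (C : Finset (Fin m × ι)) : Prop :=
  ∃ p : MvPolynomial ({e // e ∈ M} ⊕ {e // e ∈ C}) ℂ, p ≠ 0 ∧
    ∀ v : ({e // e ∈ M} ⊕ {e // e ∈ C}) → ℂ,
      MvPolynomial.eval v p ≠ 0 → ∀ s : ℂ,
        (Matrix.fromRows
            (Pattern.realize M (fun e => v (Sum.inl e)) - s • (1 : Matrix ι ι ℂ))
            (Pattern.realize C (fun e => v (Sum.inr e)))).rank = Fintype.card ι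

/-- `Hmin M` is the minimum number of dedicated sensors (rows each having exactly one
free entry) in an output pattern `C` making the pair `(M, C)` structurally observable. -/
noncomputable def Hmin {ι : Type*} [Fintype ι] [DecidableEq ι] (M : Finset (ι × ι)) : ℕ :=
  sInf {k : ℕ | ∃ C : Finset (Fin k × ι),
    (∀ i : Fin k, ∃! j : ι, (i, j) ∈ C) ∧ IsStructObs M C}

/-- The auxiliary pattern `Â = [[A', B], [0, 0]]` on the index type `Fin n ⊕ Fin q`
(states together with inputs viewed as extra state vertices), where `A'` equals `A`
except that every row of `A` indexed by the set `I` of input-driven states is set to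
zero. -/
def auxPattern {n q : ℕ} (A : Finset (Fin n × Fin n)) (B : Finset (Fin n × Fin q))
    (I : Finset (Fin n)) : Finset ((Fin n ⊕ Fin q) × (Fin n ⊕ Fin q)) :=
  ((A.filter fun e => e.1 ∉ I).image fun e => (Sum.inl e.1, Sum.inl e.2)) ∪
    (B.image fun e => (Sum.inl e.1, Sum.inr e.2))

/-!
Fix a generic realization `v₀` of `(A, B, C)`. Substituting the free entries of `Â` and `[C 0]`
for the corresponding entries of `A`, `B`, `C`, and freezing the deleted entries of `A` at their
values in `v₀`, turns the GSIO polynomial into a nonzero polynomial on the auxiliary pattern.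
Where it does not vanish, the realized `Ã'` differs from a realization `Ã` with full-rank
Rosenbrock pencil only in the input-driven rows, so `Ã' = Ã - B̃ F` for some feedback `F`.
Feedback is the right multiplication by the invertible `[[1, 0], [-F, 1]]`, hence preserves
injectivity of the Rosenbrock matrix, and `[Â - s I; [C̃ 0]]` contains all of its rows.
-/

namespace Matrix

variable {R K : Type*} [CommRing R] [Field K] {l m n o : Type*}

theorem rank_eq_card_iff_mulVec_injective [Fintype n] (M : Matrix m n K) :
    M.rank = Fintype.card n ↔ Function.Injective M.mulVec := by
  have h := LinearMap.finrank_range_add_finrank_ker M.mulVecLin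
  rw [Module.finrank_fintype_fun_eq_card] at h
  rw [← coe_mulVecLin, ← LinearMap.ker_eq_bot, ← Submodule.finrank_eq_zero, rank]
  omega

theorem mulVec_injective_of_submatrix [Fintype n] {X : Matrix m n R} (g : o → m)
    (h : Function.Injective (X.submatrix g id).mulVec) : Function.Injective X.mulVec :=
  fun _ _ hvw => h (funext fun i => congrFun hvw (g i))

theorem mulVec_injective_fromBlocks_sub_mul [Fintype n] [Fintype l] [DecidableEq n]
    [DecidableEq l] {A : Matrix o n R} {B : Matrix o l R} {C : Matrix m n R}
    (h : Function.Injective (fromBlocks A B C 0).mulVec) (F : Matrix l n R) :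
    Function.Injective (fromBlocks (A - B * F) B C 0).mulVec := by
  set T : Matrix (n ⊕ l) (n ⊕ l) R := fromBlocks 1 0 (-F) 1
  set T' : Matrix (n ⊕ l) (n ⊕ l) R := fromBlocks 1 0 F 1
  have hfactor : fromBlocks (A - B * F) B C 0 = fromBlocks A B C 0 * T := by
    simp [T, fromBlocks_multiply, sub_eq_add_neg]
  have hinv : T' * T = 1 := by
    simp [T, T', fromBlocks_multiply, ← fromBlocks_one]
  intro v w hvw
  rw [hfactor, ← mulVec_mulVec, ← mulVec_mulVec] at hvw
  simpa [mulVec_mulVec, hinv] using congrArg (T' *ᵥ ·) (h hvw)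

theorem mul_of_div_eq [Fintype l] {B : Matrix m l K} {f : l → m} (hf : Function.Injective f)
    (hB₀ : ∀ i j, i ≠ f j → B i j = 0) (hB : ∀ j, B (f j) j ≠ 0) {D : Matrix m n K}
    (hD : ∀ i, i ∉ Set.range f → D i = 0) :
    B * of (fun j k => D (f j) k / B (f j) j) = D := by
  ext i k
  rw [mul_apply]
  by_cases hi : i ∈ Set.range f
  · obtain ⟨j₀, rfl⟩ := hi
    rw [Finset.sum_eq_single j₀ (fun j _ hj => by rw [hB₀ _ _ (hf.ne (Ne.symm hj)), zero_mul])
      (by simp)]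
    exact mul_div_cancel₀ _ (hB j₀)
  · rw [hD i hi, Finset.sum_eq_zero fun j _ => by
      rw [hB₀ i j fun h => hi ⟨j, h.symm⟩, zero_mul]]
    rfl

theorem fromRows_fromBlocks_sub_submatrix [DecidableEq n] [DecidableEq l] (A : Matrix n n R)
    (B : Matrix n l R) (C : Matrix m n R) (s : R) :
    (fromRows (fromBlocks A B 0 (0 : Matrix l l R) - s • 1) (fromCols C 0)).submatrix
        (Sum.map Sum.inl id) id =
      fromBlocks (A - s • 1) B C 0 := by
  ext (i | i) (j | j) <;> simp [one_apply]

theorem mulVec_injective_fromRows_of_rosenbrock [Fintype n] [Fintype l] [DecidableEq n]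
    [DecidableEq l] {A : Matrix n n K} {B : Matrix n l K} {C : Matrix m n K} {f : l → n}
    (hf : Function.Injective f) (hB₀ : ∀ i j, i ≠ f j → B i j = 0) (hB : ∀ j, B (f j) j ≠ 0)
    (I : Finset n) (hI : ∀ i ∈ I, i ∈ Set.range f) (s : K)
    (h : Function.Injective (fromBlocks (A - s • 1) B C 0).mulVec) :
    Function.Injective (fromRows
      (fromBlocks (of fun i j => if i ∈ I then 0 else A i j) B 0 (0 : Matrix l l K) - s • 1)
      (fromCols C 0)).mulVec := by
  apply mulVec_injective_of_submatrix (Sum.map Sum.inl id)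
  set D : Matrix n n K := of fun i j => if i ∈ I then A i j else 0
  have hBF : B * of (fun j k => D (f j) k / B (f j) j) = D :=
    mul_of_div_eq hf hB₀ hB fun i hi => funext fun j => by
      simp [D, show i ∉ I from fun h => hi (hI i h)]
  have hA : (of fun i j => if i ∈ I then 0 else A i j) - s • 1 = A - s • 1 - D := by
    ext i j
    by_cases hi : i ∈ I <;> simp [D, hi]
  rw [fromRows_fromBlocks_sub_submatrix, hA, ← hBF]
  exact mulVec_injective_fromBlocks_sub_mul h _

end Matrix

theorem MvPolynomial.exists_eval_ne_zero {R σ : Type*} [CommRing R] [IsDomain R] [Infinite R]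
    {p : MvPolynomial σ R} (hp : p ≠ 0) : ∃ x, MvPolynomial.eval x p ≠ 0 := by
  by_contra! h
  exact hp (MvPolynomial.funext fun x => by simp [h x])

theorem Pattern.realize_apply {a b : Type*} [DecidableEq a] [DecidableEq b] (P : Finset (a × b))
    (v : {e // e ∈ P} → ℂ) (i : a) (j : b) :
    Pattern.realize P v i j = if h : (i, j) ∈ P then v ⟨(i, j), h⟩ else 0 :=
  rfl

def extendOutput {m n : ℕ} (q : ℕ) (C : Finset (Fin m × Fin n)) :
    Finset (Fin m × (Fin n ⊕ Fin q)) :=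
  C.image fun e => (e.1, (Sum.inl e.2 : Fin n ⊕ Fin q))

section AuxPattern

open MvPolynomial

variable {n q m : ℕ} {A : Finset (Fin n × Fin n)} {B : Finset (Fin n × Fin q)}
  {C : Finset (Fin m × Fin n)} {I : Finset (Fin n)}

@[simp]
theorem mem_auxPattern_inl_inl {i j : Fin n} :
    (Sum.inl i, Sum.inl j) ∈ auxPattern A B I ↔ (i, j) ∈ A ∧ i ∉ I := by
  simp [auxPattern]

@[simp]
theorem mem_auxPattern_inl_inr {i : Fin n} {j : Fin q} :
    (Sum.inl i, Sum.inr j) ∈ auxPattern A B I ↔ (i, j) ∈ B := by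
  simp [auxPattern]

@[simp]
theorem mk_inr_notMem_auxPattern {i : Fin q} {y : Fin n ⊕ Fin q} :
    (Sum.inr i, y) ∉ auxPattern A B I := by
  simp [auxPattern]

@[simp]
theorem mem_extendOutput_inl {i : Fin m} {j : Fin n} :
    (i, Sum.inl j) ∈ extendOutput q C ↔ (i, j) ∈ C := by
  simp [extendOutput]

@[simp]
theorem mk_inr_notMem_extendOutput {i : Fin m} {j : Fin q} :
    (i, Sum.inr j) ∉ extendOutput q C := by
  simp [extendOutput]

theorem extendOutput_existsUnique (hC : ∀ i : Fin m, ∃! j : Fin n, (i, j) ∈ C) (i : Fin m) :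
    ∃! y : Fin n ⊕ Fin q, (i, y) ∈ extendOutput q C := by
  obtain ⟨j, hj, huniq⟩ := hC i
  refine ⟨Sum.inl j, mem_extendOutput_inl.2 hj, ?_⟩
  rintro (y | y) hy
  · rw [huniq y (mem_extendOutput_inl.1 hy)]
  · exact absurd hy mk_inr_notMem_extendOutput

variable (A B C I) in
/-- The entries of `A` in the deleted rows `I` are frozen at their values in `v₀`; every other
entry of `A`, `B`, `C` becomes the variable of the matching free entry of `Â` or `[C 0]`. -/
noncomputable def auxSubst (v₀ : ({e // e ∈ A} ⊕ {e // e ∈ B}) ⊕ {e // e ∈ C} → ℂ) :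
    ({e // e ∈ A} ⊕ {e // e ∈ B}) ⊕ {e // e ∈ C} →
      MvPolynomial ({e // e ∈ auxPattern A B I} ⊕ {e // e ∈ extendOutput q C}) ℂ
  | .inl (.inl ⟨(i, j), h⟩) =>
    if hi : i ∈ I then MvPolynomial.C (v₀ (.inl (.inl ⟨(i, j), h⟩)))
    else X (.inl ⟨(.inl i, .inl j), mem_auxPattern_inl_inl.2 ⟨h, hi⟩⟩)
  | .inl (.inr ⟨(i, j), h⟩) => X (.inl ⟨(.inl i, .inr j), mem_auxPattern_inl_inr.2 h⟩)
  | .inr ⟨(i, j), h⟩ => X (.inr ⟨(i, .inl j), mem_extendOutput_inl.2 h⟩)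

variable (A B C I) in
def auxLift (v₀ : ({e // e ∈ A} ⊕ {e // e ∈ B}) ⊕ {e // e ∈ C} → ℂ) :
    {e // e ∈ auxPattern A B I} ⊕ {e // e ∈ extendOutput q C} → ℂ
  | .inl ⟨(.inl i, .inl j), h⟩ => v₀ (.inl (.inl ⟨(i, j), (mem_auxPattern_inl_inl.1 h).1⟩))
  | .inl ⟨(.inl i, .inr j), h⟩ => v₀ (.inl (.inr ⟨(i, j), mem_auxPattern_inl_inr.1 h⟩))
  | .inl ⟨(.inr _, _), _⟩ => 0
  | .inr ⟨(i, .inl j), h⟩ => v₀ (.inr ⟨(i, j), mem_extendOutput_inl.1 h⟩)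
  | .inr ⟨(_, .inr _), _⟩ => 0

theorem eval_auxLift_auxSubst (v₀ : ({e // e ∈ A} ⊕ {e // e ∈ B}) ⊕ {e // e ∈ C} → ℂ) (e) :
    eval (auxLift A B C I v₀) (auxSubst A B C I v₀ e) = v₀ e := by
  rcases e with ((⟨⟨i, j⟩, h⟩ | ⟨⟨i, j⟩, h⟩) | ⟨⟨i, j⟩, h⟩)
  · by_cases hi : i ∈ I <;> simp [auxSubst, auxLift, hi]
  · simp [auxSubst, auxLift]
  · simp [auxSubst, auxLift]

theorem realize_auxPattern (v₀ : ({e // e ∈ A} ⊕ {e // e ∈ B}) ⊕ {e // e ∈ C} → ℂ)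
    (v : {e // e ∈ auxPattern A B I} ⊕ {e // e ∈ extendOutput q C} → ℂ) :
    Pattern.realize (auxPattern A B I) (fun e => v (.inl e)) =
      Matrix.fromBlocks
        (Matrix.of fun i j => if i ∈ I then 0 else
          Pattern.realize A (fun e => eval v (auxSubst A B C I v₀ (.inl (.inl e)))) i j)
        (Pattern.realize B (fun e => eval v (auxSubst A B C I v₀ (.inl (.inr e))))) 0 0 := by
  ext (i | i) (j | j)
  · by_cases hi : i ∈ I <;> by_cases hA : (i, j) ∈ A <;>
      simp [Pattern.realize_apply, auxSubst, hi, hA]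
  · by_cases hB : (i, j) ∈ B <;> simp [Pattern.realize_apply, auxSubst, hB]
  all_goals simp [Pattern.realize_apply]

theorem realize_extendOutput (v₀ : ({e // e ∈ A} ⊕ {e // e ∈ B}) ⊕ {e // e ∈ C} → ℂ)
    (v : {e // e ∈ auxPattern A B I} ⊕ {e // e ∈ extendOutput q C} → ℂ) :
    Pattern.realize (extendOutput q C) (fun e => v (.inr e)) =
      Matrix.fromCols (Pattern.realize C (fun e => eval v (auxSubst A B C I v₀ (.inr e)))) 0 := by
  ext i (j | j)
  · by_cases hC : (i, j) ∈ C <;> simp [Pattern.realize_apply, auxSubst, hC]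
  · simp [Pattern.realize_apply]

end AuxPattern

open MvPolynomial in
theorem IsGSIO.isStructObs_auxPattern {n q m : ℕ} {A : Finset (Fin n × Fin n)}
    {B : Finset (Fin n × Fin q)} {C : Finset (Fin m × Fin n)} {f : Fin q → Fin n}
    (hf : Function.Injective f) (hB : ∀ i j, (i, j) ∈ B ↔ i = f j) (hGSIO : IsGSIO A B C) :
    IsStructObs (auxPattern A B (Finset.image f Finset.univ)) (extendOutput q C) := by
  obtain ⟨p, hp, hrank⟩ := hGSIO
  set I := Finset.image f Finset.univ
  -- the extra factor keeps the input gains of the generic realization nonzero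
  set P := p * ∏ e : {e // e ∈ B}, X (.inl (.inr e))
  obtain ⟨v₀, hv₀⟩ := exists_eval_ne_zero
    (mul_ne_zero hp (Finset.prod_ne_zero_iff.2 fun e _ => X_ne_zero _))
  have heval (v) : eval v (bind₁ (auxSubst A B C I v₀) P) =
      eval (fun e => eval v (auxSubst A B C I v₀ e)) P :=
    eval₂Hom_bind₁ _ _ _ _
  refine ⟨bind₁ (auxSubst A B C I v₀) P, fun h => hv₀ ?_, fun v hv s => ?_⟩
  · rw [← funext (eval_auxLift_auxSubst (I := I) v₀), ← heval, h, map_zero]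
  rw [heval] at hv
  simp only [P, map_mul, map_prod, eval_X, mul_ne_zero_iff, Finset.prod_ne_zero_iff] at hv
  obtain ⟨hvp, hvB⟩ := hv
  rw [realize_auxPattern v₀, realize_extendOutput v₀, Matrix.rank_eq_card_iff_mulVec_injective]
  refine Matrix.mulVec_injective_fromRows_of_rosenbrock hf ?_ ?_ I (by simp [I]) s
    ((Matrix.rank_eq_card_iff_mulVec_injective _).1 ?_)
  · exact fun i j hij => by simp [Pattern.realize_apply, hB, hij]
  · intro j
    simpa [Pattern.realize_apply, hB, auxSubst] using hvB ⟨(f j, j), (hB _ _).2 rfl⟩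
  · simpa using hrank _ hvp s

/-- If `(A, B, C)` is GSIO, where `B` is a dedicated input pattern (input `j` drives
state `f j`, `f` injective) and `C` is a dedicated output pattern on the states, then
the auxiliary pair `(Â, [C 0])` is structurally observable, where `[C 0]` is `C`
extended by `q` zero columns indexed by the input vertices of `Â`. Consequently, the
number `m` of dedicated sensors in any such `C` is at least `H(Â)`. -/
theorem GSIO_implies_aux_structural_observability (n q m : ℕ)
    (A : Finset (Fin n × Fin n)) (B : Finset (Fin n × Fin q))
    (f : Fin q → Fin n) (hf : Function.Injective f)
    (hB : ∀ (i : Fin n) (j : Fin q), (i, j) ∈ B ↔ i = f j)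
    (C : Finset (Fin m × Fin n))
    (hded : ∀ i : Fin m, ∃! j : Fin n, (i, j) ∈ C)
    (hGSIO : IsGSIO A B C) :
    IsStructObs (auxPattern A B (Finset.image f Finset.univ))
        (C.image fun e => (e.1, (Sum.inl e.2 : Fin n ⊕ Fin q))) ∧
      Hmin (auxPattern A B (Finset.image f Finset.univ)) ≤ m := by
  have hobs := hGSIO.isStructObs_auxPattern hf hB
  exact ⟨hobs, Nat.sInf_le ⟨extendOutput q C, extendOutput_existsUnique hded, hobs⟩⟩
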